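/- Fix N ≥ 2 and β ∈ ℝ. Let (k_t)_{t≥0} be i.i.d. random indices uniformly distributed on {1,…,N}, and define the compensator process (s_t)_{t≥0} in ℝ^N by s₀ ≡ 0 and, at each step, s_{t+1}(k_t) = (s_t(k_t)+s_t(k_t+1))/2 + β/2, s_{t+1}(k_t+1) = (s_t(k_t)+s_t(k_t+1))/2 − β/2 (indices cyclic), with all other coordinates unchanged. Then ∑_{i=1}^N s_t(i) = 0 for all t, and E[‖s_t‖₂²] ≤ β²·N³ for all t ≥ 0. -/

import Mathlib

open MeasureTheory ProbabilityTheory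

/-- Compensator update at the cyclic edge `(k, k+1)` with slope `β`: the pair
`(s(k), s(k+1))` is replaced by `(m + β/2, m - β/2)` where `m` is its mean. -/
noncomputable def compUpdate {N : ℕ} (β : ℝ) (s : ZMod N → ℝ) (k : ZMod N) :
    ZMod N → ℝ :=
  fun i => if i = k then (s k + s (k + 1)) / 2 + β / 2
    else if i = k + 1 then (s k + s (k + 1)) / 2 - β / 2
    else s i

/-- The compensator process driven by the edge sequence `ks`, started from `0`. -/
noncomputable def compProcess {N : ℕ} (β : ℝ) (ks : ℕ → ZMod N) : ℕ → ZMod N → ℝ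
  | 0 => fun _ => 0
  | t + 1 => compUpdate β (compProcess β ks t) (ks t)

section Det
variable {N : ℕ} [NeZero N]

lemma edge_ne (hN : 2 ≤ N) (k : ZMod N) : k ≠ k + 1 := by
  intro h
  have h1 : (0 : ZMod N) = 1 := by
    have := h
    nth_rewrite 1 [← add_zero k] at this
    exact add_left_cancel this
  haveI : Fact (1 < N) := ⟨hN⟩
  have h2 : (1 : ZMod N).val = 1 := ZMod.val_one N
  rw [← h1] at h2
  simp [ZMod.val_zero] at h2

lemma sum_twopoint (k : ZMod N) (hk : k ≠ k + 1) (g : ZMod N → ℝ) (c₁ c₂ : ℝ) :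
    ∑ i, (if i = k then c₁ else if i = k + 1 then c₂ else g i)
      = c₁ + c₂ + ∑ i, g i - g k - g (k + 1) := by
  have key : ∀ i : ZMod N, (if i = k then c₁ else if i = k + 1 then c₂ else g i)
      = g i + ((if i = k then c₁ - g k else 0) + (if i = k + 1 then c₂ - g (k + 1) else 0)) := by
    intro i
    split_ifs with h1 h2 h3
    · exact absurd (h1 ▸ h2) hk
    · subst h1; ring
    · subst h3; ring
    · ring
  rw [Finset.sum_congr rfl (fun i _ => key i), Finset.sum_add_distrib, Finset.sum_add_distrib,
    Finset.sum_ite_eq' Finset.univ k (fun _ => c₁ - g k),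
    Finset.sum_ite_eq' Finset.univ (k + 1) (fun _ => c₂ - g (k + 1))]
  simp only [Finset.mem_univ, if_true]
  ring

lemma sum_compUpdate (hN : 2 ≤ N) (β : ℝ) (s : ZMod N → ℝ) (k : ZMod N) :
    ∑ i, compUpdate β s k i = ∑ i, s i := by
  unfold compUpdate
  rw [sum_twopoint k (edge_ne hN k) s]
  ring

lemma sum_sq_compUpdate (hN : 2 ≤ N) (β : ℝ) (s : ZMod N → ℝ) (k : ZMod N) :
    ∑ i, (compUpdate β s k i) ^ 2
      = ∑ i, (s i) ^ 2 - (s k - s (k + 1)) ^ 2 / 2 + β ^ 2 / 2 := by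
  have key : ∀ i : ZMod N, (compUpdate β s k i) ^ 2
      = (if i = k then ((s k + s (k + 1)) / 2 + β / 2) ^ 2
          else if i = k + 1 then ((s k + s (k + 1)) / 2 - β / 2) ^ 2 else (s i) ^ 2) := by
    intro i
    unfold compUpdate
    split_ifs <;> rfl
  rw [Finset.sum_congr rfl (fun i _ => key i), sum_twopoint k (edge_ne hN k) (fun i => (s i) ^ 2)]
  ring

set_option linter.unusedSectionVars false
variable {N : ℕ} [NeZero N]

lemma poincare_pt (hN : 2 ≤ N) (s : ZMod N → ℝ) (h : ∑ i, s i = 0) (i : ZMod N) :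
    s i ^ 2 ≤ N * ∑ a, (s a - s (a + 1)) ^ 2 := by
  obtain ⟨j, hj⟩ : ∃ j, s i * s j ≤ 0 := by
    by_contra hc
    push_neg at hc
    have hpos : 0 < ∑ j, s i * s j :=
      Finset.sum_pos (fun j _ => hc j) Finset.univ_nonempty
    rw [← Finset.mul_sum, h, mul_zero] at hpos
    exact lt_irrefl _ hpos
  set L := (j - i).val with hLdef
  have hLlt : L < N := ZMod.val_lt _
  have hcast : ((L : ℕ) : ZMod N) = j - i := ZMod.natCast_zmod_val _
  have htel : s i - s j = ∑ r ∈ Finset.range L, (s (i + (r : ZMod N)) - s (i + (r : ZMod N) + 1)) := by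
    have h0 := Finset.sum_range_sub' (f := fun r : ℕ => s (i + (r : ZMod N))) L
    have h1 : ∀ r : ℕ, s (i + ((r : ℕ) : ZMod N)) - s (i + (((r + 1 : ℕ)) : ZMod N))
        = s (i + (r : ZMod N)) - s (i + (r : ZMod N) + 1) := by
      intro r; push_cast; ring_nf
    rw [Finset.sum_congr rfl (fun r _ => h1 r)] at h0
    rw [h0]
    simp [hcast]
  set d : ZMod N → ℝ := fun a => s a - s (a + 1) with hd
  have hCS : (s i - s j) ^ 2 ≤ (L : ℝ) * ∑ r ∈ Finset.range L, (d (i + (r : ZMod N))) ^ 2 := by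
    rw [htel]
    simpa [-Finset.sum_sub_distrib] using sq_sum_le_card_mul_sum_sq
      (s := Finset.range L) (f := fun r : ℕ => d (i + (r : ZMod N)))
  have hsub : ∑ r ∈ Finset.range L, (d (i + (r : ZMod N))) ^ 2 ≤ ∑ a, (d a) ^ 2 := by
    have hinj : ∀ x ∈ Finset.range L, ∀ y ∈ Finset.range L,
        i + ((x : ℕ) : ZMod N) = i + ((y : ℕ) : ZMod N) → x = y := by
      intro x hx y hy hxy
      have hxy' : ((x : ℕ) : ZMod N) = ((y : ℕ) : ZMod N) := by
        exact add_left_cancel hxy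
      have hx' : x < N := lt_trans (Finset.mem_range.mp hx) hLlt
      have hy' : y < N := lt_trans (Finset.mem_range.mp hy) hLlt
      have := congrArg ZMod.val hxy'
      rwa [ZMod.val_cast_of_lt hx', ZMod.val_cast_of_lt hy'] at this
    rw [show (∑ r ∈ Finset.range L, (d (i + (r : ZMod N))) ^ 2)
        = ∑ a ∈ (Finset.range L).image (fun r : ℕ => i + (r : ZMod N)), (d a) ^ 2 from
      (Finset.sum_image (f := fun a => (d a) ^ 2) hinj).symm]
    exact Finset.sum_le_sum_of_subset_of_nonneg (Finset.subset_univ _)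
      (fun _ _ _ => sq_nonneg _)
  have hsign : s i ^ 2 ≤ (s i - s j) ^ 2 := by nlinarith [sq_nonneg (s j)]
  have hdnn : (0:ℝ) ≤ ∑ a, (d a) ^ 2 := Finset.sum_nonneg fun _ _ => sq_nonneg _
  calc s i ^ 2 ≤ (s i - s j) ^ 2 := hsign
    _ ≤ (L : ℝ) * ∑ r ∈ Finset.range L, (d (i + (r : ZMod N))) ^ 2 := hCS
    _ ≤ (L : ℝ) * ∑ a, (d a) ^ 2 := by
        exact mul_le_mul_of_nonneg_left hsub (by positivity)
    _ ≤ (N : ℝ) * ∑ a, (d a) ^ 2 := by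
        exact mul_le_mul_of_nonneg_right (by exact_mod_cast hLlt.le) hdnn

lemma poincare (hN : 2 ≤ N) (s : ZMod N → ℝ) (h : ∑ i, s i = 0) :
    ∑ i, s i ^ 2 ≤ (N : ℝ) ^ 2 * ∑ a, (s a - s (a + 1)) ^ 2 := by
  calc ∑ i, s i ^ 2 ≤ ∑ _i : ZMod N, (N : ℝ) * ∑ a, (s a - s (a + 1)) ^ 2 :=
        Finset.sum_le_sum fun i _ => poincare_pt hN s h i
    _ = (N : ℝ) ^ 2 * ∑ a, (s a - s (a + 1)) ^ 2 := by
        rw [Finset.sum_const, Finset.card_univ, ZMod.card]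
        push_cast
        ring


lemma step_bound (hN : 2 ≤ N) (β : ℝ) (s : ZMod N → ℝ) (h : ∑ i, s i = 0) :
    ∑ a : ZMod N, ∑ i, (compUpdate β s a i) ^ 2
      ≤ ((N : ℝ) - 1 / (2 * (N : ℝ) ^ 2)) * ∑ i, (s i) ^ 2 + (N : ℝ) * β ^ 2 / 2 := by
  have hNpos : (0:ℝ) < N := by exact_mod_cast (by omega : 0 < N)
  set Q := ∑ i, (s i) ^ 2 with hQ
  set D := ∑ a, (s a - s (a + 1)) ^ 2 with hD
  have heq : ∑ a : ZMod N, ∑ i, (compUpdate β s a i) ^ 2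
      = (N : ℝ) * Q - D / 2 + (N : ℝ) * β ^ 2 / 2 := by
    rw [Finset.sum_congr rfl (fun a _ => sum_sq_compUpdate hN β s a)]
    rw [Finset.sum_add_distrib, Finset.sum_sub_distrib, Finset.sum_const, Finset.sum_const,
      Finset.card_univ, ZMod.card, ← Finset.sum_div]
    push_cast
    ring
  have hpo : Q ≤ (N : ℝ) ^ 2 * D := poincare hN s h
  have : Q / (N : ℝ) ^ 2 ≤ D := by
    rw [div_le_iff₀ (by positivity)]
    linarith [hpo]
  rw [heq]
  have h2 : (N:ℝ) * Q - D / 2 ≤ (N:ℝ) * Q - Q / (2 * (N:ℝ)^2) := by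
    have : Q / (2 * (N:ℝ)^2) ≤ D / 2 := by
      rw [div_le_div_iff₀ (by positivity) (by positivity)]
      calc Q * 2 ≤ ((N:ℝ)^2 * D) * 2 := by linarith
        _ = D * (2 * (N:ℝ)^2) := by ring
    linarith
  have h3 : (N:ℝ) * Q - Q / (2 * (N:ℝ)^2) = ((N : ℝ) - 1 / (2 * (N : ℝ) ^ 2)) * Q := by
    field_simp
  linarith

lemma sum_compProcess (hN : 2 ≤ N) (β : ℝ) (ks : ℕ → ZMod N) (t : ℕ) :
    ∑ i, compProcess β ks t i = 0 := by
  induction t with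
  | zero => simp [compProcess]
  | succ t ih =>
    show ∑ i, compUpdate β (compProcess β ks t) (ks t) i = 0
    rw [sum_compUpdate hN β _ (ks t), ih]

lemma compProcess_congr (β : ℝ) {ks ks' : ℕ → ZMod N} (t : ℕ)
    (h : ∀ s < t, ks s = ks' s) : compProcess β ks t = compProcess β ks' t := by
  induction t with
  | zero => rfl
  | succ t ih =>
    show compUpdate β (compProcess β ks t) (ks t)
        = compUpdate β (compProcess β ks' t) (ks' t)
    rw [ih (fun s hs => h s (hs.trans (Nat.lt_succ_self t))), h t (Nat.lt_succ_self t)]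

/-- extension of a finite tuple of edges to an infinite sequence -/
def extSeq {N : ℕ} [NeZero N] {t : ℕ} (v : Fin t → ZMod N) : ℕ → ZMod N :=
  fun s => if h : s < t then v ⟨s, h⟩ else 0

noncomputable def detSum (β : ℝ) (N : ℕ) [NeZero N] (t : ℕ) : ℝ :=
  ∑ v : Fin t → ZMod N, ∑ i : ZMod N, (compProcess β (extSeq v) t i) ^ 2

lemma detSum_nonneg (β : ℝ) (t : ℕ) : 0 ≤ detSum β N t :=
  Finset.sum_nonneg fun _ _ => Finset.sum_nonneg fun _ _ => sq_nonneg _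

lemma detSum_succ_le (hN : 2 ≤ N) (β : ℝ) (t : ℕ) :
    detSum β N (t + 1)
      ≤ ((N : ℝ) - 1 / (2 * (N : ℝ) ^ 2)) * detSum β N t + (N:ℝ) ^ t * ((N : ℝ) * β ^ 2 / 2) := by
  have key : ∀ (a : ZMod N) (v : Fin t → ZMod N),
      compProcess β (extSeq (Fin.snocEquiv (fun _ => ZMod N) (a, v))) (t + 1)
        = compUpdate β (compProcess β (extSeq v) t) a := by
    intro a v
    show compUpdate β (compProcess β (extSeq (Fin.snocEquiv (fun _ => ZMod N) (a, v))) t)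
        (extSeq (Fin.snocEquiv (fun _ => ZMod N) (a, v)) t)
      = compUpdate β (compProcess β (extSeq v) t) a
    have h1 : compProcess β (extSeq (Fin.snocEquiv (fun _ => ZMod N) (a, v))) t
        = compProcess β (extSeq v) t := by
      apply compProcess_congr
      intro s hs
      simp only [extSeq, Fin.snocEquiv_apply, dif_pos hs, dif_pos (hs.trans (Nat.lt_succ_self t))]
      simp [Fin.snoc, hs]
    have h2 : extSeq (Fin.snocEquiv (fun _ => ZMod N) (a, v)) t = a := by
      simp only [extSeq, Fin.snocEquiv_apply, dif_pos (Nat.lt_succ_self t)]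
      simp [Fin.snoc]
    rw [h1, h2]
  have hsum : detSum β N (t + 1)
      = ∑ v : Fin t → ZMod N, ∑ a : ZMod N,
          ∑ i : ZMod N, (compUpdate β (compProcess β (extSeq v) t) a i) ^ 2 := by
    unfold detSum
    rw [← Equiv.sum_comp (Fin.snocEquiv (fun _ => ZMod N))
      (fun w => ∑ i : ZMod N, (compProcess β (extSeq w) (t+1) i) ^ 2)]
    rw [Fintype.sum_prod_type, Finset.sum_comm]
    exact Finset.sum_congr rfl fun v _ => Finset.sum_congr rfl fun a _ => by rw [key a v]
  rw [hsum]
  calc ∑ v : Fin t → ZMod N, ∑ a : ZMod N,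
          ∑ i : ZMod N, (compUpdate β (compProcess β (extSeq v) t) a i) ^ 2
      ≤ ∑ v : Fin t → ZMod N,
          (((N : ℝ) - 1 / (2 * (N : ℝ) ^ 2)) * ∑ i, (compProcess β (extSeq v) t i) ^ 2
            + (N : ℝ) * β ^ 2 / 2) :=
        Finset.sum_le_sum fun v _ =>
          step_bound hN β _ (sum_compProcess hN β (extSeq v) t)
    _ = ((N : ℝ) - 1 / (2 * (N : ℝ) ^ 2)) * detSum β N t + (N:ℝ) ^ t * ((N : ℝ) * β ^ 2 / 2) := by
        rw [Finset.sum_add_distrib, Finset.sum_const, ← Finset.mul_sum, Finset.card_univ]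
        have : Fintype.card (Fin t → ZMod N) = N ^ t := by
          simp [ZMod.card]
        rw [this, detSum]
        push_cast
        ring

lemma detSum_main (hN : 2 ≤ N) (β : ℝ) (t : ℕ) :
    ((N : ℝ)⁻¹) ^ t * detSum β N t ≤ β ^ 2 * (N : ℝ) ^ 3 := by
  have hn2 : (2:ℝ) ≤ (N:ℝ) := by exact_mod_cast hN
  have hNpos : (0:ℝ) < N := by linarith
  induction t with
  | zero =>
    have : detSum β N 0 = 0 := by
      unfold detSum
      apply Finset.sum_eq_zero
      intro v _
      apply Finset.sum_eq_zero
      intro i _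
      show (compProcess β (extSeq v) 0 i) ^ 2 = 0
      simp [compProcess]
    rw [this]
    simp only [mul_zero]
    positivity
  | succ t ih =>
    have hrec := detSum_succ_le hN β t
    set y := ((N : ℝ)⁻¹) ^ t * detSum β N t with hy
    have hynn : 0 ≤ y := mul_nonneg (by positivity) (detSum_nonneg β t)
    have hstep : ((N : ℝ)⁻¹) ^ (t+1) * detSum β N (t+1)
        ≤ (1 - 1 / (2 * (N:ℝ)^3)) * y + β ^ 2 / 2 := by
      have h1 : ((N : ℝ)⁻¹) ^ (t+1) * detSum β N (t+1)
          ≤ ((N : ℝ)⁻¹) ^ (t+1) * (((N : ℝ) - 1 / (2 * (N : ℝ) ^ 2)) * detSum β N t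
              + (N:ℝ) ^ t * ((N : ℝ) * β ^ 2 / 2)) :=
        mul_le_mul_of_nonneg_left hrec (by positivity)
      have h2 : ((N : ℝ)⁻¹) ^ (t+1) * (((N : ℝ) - 1 / (2 * (N : ℝ) ^ 2)) * detSum β N t
              + (N:ℝ) ^ t * ((N : ℝ) * β ^ 2 / 2))
          = (1 - 1 / (2 * (N:ℝ)^3)) * y + β ^ 2 / 2 := by
        rw [hy]
        have hne : (N:ℝ) ≠ 0 := ne_of_gt hNpos
        have hpow : ((N:ℝ)⁻¹) ^ t * (N:ℝ) ^ t = 1 := by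
          rw [← mul_pow, inv_mul_cancel₀ hne, one_pow]
        field_simp
        have h_e : (N:ℝ) * (N:ℝ)⁻¹ = 1 := mul_inv_cancel₀ hne
        linear_combination (-((N:ℝ)⁻¹ ^ t * detSum β N t) + 2 * (N:ℝ)^3 * ((N:ℝ)⁻¹ ^ t * detSum β N t)
          + (N:ℝ)^3 * β^2) * h_e + (N:ℝ)^3 * β^2 * ((N:ℝ) * (N:ℝ)⁻¹) * hpow
      linarith
    have hcoef : 0 ≤ 1 - 1 / (2 * (N:ℝ)^3) := by
      have : 1 / (2 * (N:ℝ)^3) ≤ 1 := by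
        rw [div_le_one (by positivity)]
        nlinarith
      linarith
    calc ((N : ℝ)⁻¹) ^ (t+1) * detSum β N (t+1)
        ≤ (1 - 1 / (2 * (N:ℝ)^3)) * y + β ^ 2 / 2 := hstep
      _ ≤ (1 - 1 / (2 * (N:ℝ)^3)) * (β ^ 2 * (N:ℝ)^3) + β ^ 2 / 2 :=
          add_le_add_left (mul_le_mul_of_nonneg_left ih hcoef) _
      _ = β ^ 2 * (N:ℝ)^3 - β^2 * (N:ℝ)^3 / (2 * (N:ℝ)^3) + β ^ 2 / 2 := by ring
      _ = β ^ 2 * (N:ℝ)^3 := by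
          have hne : (N:ℝ)^3 ≠ 0 := by positivity
          field_simp
          ring

end Det

section Prob
open MeasureTheory ProbabilityTheory
variable {N : ℕ} [NeZero N] {Ω : Type*} [MeasurableSpace Ω] (P : Measure Ω)
  [IsProbabilityMeasure P] (k : ℕ → Ω → ZMod N)

lemma nullmeas_fiber
    (hunif : ∀ (t : ℕ) (a : ZMod N), P {ω | k t ω = a} = (N : ENNReal)⁻¹)
    (t : ℕ) (a : ZMod N) : NullMeasurableSet {ω | k t ω = a} P := by
  set A : Set Ω := {ω | k t ω = a} with hA
  have hNne : (N : ENNReal) ≠ 0 := by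
    exact_mod_cast Nat.cast_ne_zero.mpr (NeZero.ne N)
  have hNnt : (N : ENNReal) ≠ ⊤ := ENNReal.natCast_ne_top N
  have hPA : P A = (N : ENNReal)⁻¹ := hunif t a
  have hAc : P Aᶜ ≤ ((N - 1 : ℕ) : ENNReal) * (N : ENNReal)⁻¹ := by
    have hsub : Aᶜ ⊆ ⋃ b ∈ Finset.univ.erase a, {ω | k t ω = b} := by
      intro ω hω
      simp only [Set.mem_iUnion, Set.mem_setOf_eq, exists_prop]
      exact ⟨k t ω, Finset.mem_erase.2 ⟨hω, Finset.mem_univ _⟩, rfl⟩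
    have hb1 : P (⋃ b ∈ Finset.univ.erase a, {ω | k t ω = b})
        ≤ ∑ b ∈ Finset.univ.erase a, P {ω | k t ω = b} :=
      measure_biUnion_finset_le (F := Measure Ω) (μ := P) (Finset.univ.erase a) (fun b => {ω | k t ω = b})
    calc P Aᶜ ≤ ∑ b ∈ Finset.univ.erase a, P {ω | k t ω = b} :=
          (measure_mono hsub).trans hb1
      _ = ((N - 1 : ℕ) : ENNReal) * (N : ENNReal)⁻¹ := by
          rw [Finset.sum_congr rfl (fun b _ => hunif t b), Finset.sum_const,
            Finset.card_erase_of_mem (Finset.mem_univ a), Finset.card_univ, ZMod.card]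
          simp [nsmul_eq_mul]
  set B := toMeasurable P A with hB
  set C := toMeasurable P Aᶜ with hC
  have hBmeas : MeasurableSet B := measurableSet_toMeasurable P A
  have hBC : P (B ∪ C) = 1 := by
    have hsub : (Set.univ : Set Ω) ⊆ B ∪ C := by
      intro ω _
      by_cases h : ω ∈ A
      · exact Or.inl (subset_toMeasurable P A h)
      · exact Or.inr (subset_toMeasurable P Aᶜ h)
    have : P Set.univ ≤ P (B ∪ C) := measure_mono hsub
    exact le_antisymm prob_le_one (by simpa using this)
  have hkey : P (B ∩ C) = 0 := by
    have hsum : P (B ∪ C) + P (B ∩ C) = P B + P C :=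
      measure_union_add_inter B (measurableSet_toMeasurable P Aᶜ)
    rw [hBC, measure_toMeasurable, measure_toMeasurable, hPA] at hsum
    have hone : (N : ENNReal)⁻¹ + ((N - 1 : ℕ) : ENNReal) * (N : ENNReal)⁻¹ = 1 := by
      have hcst : (1 : ENNReal) + ((N - 1 : ℕ) : ENNReal) = (N : ENNReal) := by
        rw [← Nat.cast_one, ← Nat.cast_add]
        congr 1
        have : 1 ≤ N := NeZero.one_le
        omega
      calc (N : ENNReal)⁻¹ + ((N - 1 : ℕ) : ENNReal) * (N : ENNReal)⁻¹
          = (1 + ((N - 1 : ℕ) : ENNReal)) * (N : ENNReal)⁻¹ := by ring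
        _ = (N : ENNReal) * (N : ENNReal)⁻¹ := by rw [hcst]
        _ = 1 := ENNReal.mul_inv_cancel hNne hNnt
    have hle : 1 + P (B ∩ C) ≤ 1 + 0 := by
      rw [add_zero, hsum]
      calc (N : ENNReal)⁻¹ + P Aᶜ
          ≤ (N : ENNReal)⁻¹ + ((N - 1 : ℕ) : ENNReal) * (N : ENNReal)⁻¹ :=
            add_le_add_right hAc _
        _ = 1 := hone
    have := ENNReal.le_of_add_le_add_left (by simp : (1 : ENNReal) ≠ ⊤) hle
    exact le_antisymm (by simpa using this) (by simp)
  have hsubBA : B \ A ⊆ B ∩ C := fun ω hω => ⟨hω.1, subset_toMeasurable P Aᶜ hω.2⟩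
  have hBA : P (B \ A) = 0 := measure_mono_null hsubBA hkey
  have hAeB : B =ᵐ[P] A :=
    MeasureTheory.ae_eq_set.2 ⟨hBA, by
      have hAB : A \ B = ∅ := Set.diff_eq_empty.2 (subset_toMeasurable P A)
      simp [hAB]⟩
  exact hBmeas.nullMeasurableSet.congr hAeB

lemma atom_measure
    (hindep : iIndepFun (m := fun _ => (⊤ : MeasurableSpace (ZMod N))) k P)
    (hunif : ∀ (t : ℕ) (a : ZMod N), P {ω | k t ω = a} = (N : ENNReal)⁻¹)
    (t : ℕ) (v : Fin t → ZMod N) :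
    P (⋂ s : Fin t, {ω | k s.val ω = v s}) = (N : ENNReal)⁻¹ ^ t := by
  set w : ℕ → ZMod N := extSeq v with hw
  have hset : (⋂ s : Fin t, {ω | k s.val ω = v s})
      = ⋂ n ∈ Finset.range t, {ω | k n ω = w n} := by
    ext ω
    simp only [Set.mem_iInter, Set.mem_setOf_eq, Finset.mem_range]
    constructor
    · intro h n hn
      have := h ⟨n, hn⟩
      simpa [hw, extSeq, dif_pos hn] using this
    · intro h s
      have := h s.val s.isLt
      simpa [hw, extSeq, dif_pos s.isLt] using this
  rw [hset, hindep.meas_biInter (S := Finset.range t)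
    (fun n _ => ⟨{w n}, trivial, by ext ω; simp⟩)]
  rw [Finset.prod_congr rfl (fun n _ => hunif n (w n)), Finset.prod_const, Finset.card_range]

lemma key_integral
    (hindep : iIndepFun (m := fun _ => (⊤ : MeasurableSpace (ZMod N))) k P)
    (hunif : ∀ (t : ℕ) (a : ZMod N), P {ω | k t ω = a} = (N : ENNReal)⁻¹)
    (t : ℕ) (g : (Fin t → ZMod N) → ℝ) :
    ∫ ω, g (fun s : Fin t => k s.val ω) ∂P
      = ∑ v : Fin t → ZMod N, ((N : ℝ)⁻¹) ^ t * g v := by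
  set A : (Fin t → ZMod N) → Set Ω := fun v => ⋂ s : Fin t, {ω | k s.val ω = v s} with hAdef
  have hAnm : ∀ v, NullMeasurableSet (A v) P := fun v =>
    NullMeasurableSet.iInter fun s => nullmeas_fiber P k hunif s.val (v s)
  have hAmeas : ∀ v, P (A v) = (N : ENNReal)⁻¹ ^ t := fun v =>
    atom_measure P k hindep hunif t v
  have hfun : ∀ ω, g (fun s : Fin t => k s.val ω)
      = ∑ v : Fin t → ZMod N, Set.indicator (A v) (fun _ => g v) ω := by
    intro ω
    rw [Finset.sum_eq_single (fun s : Fin t => k s.val ω)]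
    · rw [Set.indicator_of_mem (by
        simp only [hAdef, Set.mem_iInter, Set.mem_setOf_eq]
        exact fun _ => trivial)]
    · intro v _ hv
      apply Set.indicator_of_notMem
      simp only [hAdef, Set.mem_iInter, Set.mem_setOf_eq]
      intro hall
      exact hv (funext fun s => (hall s).symm)
    · intro h
      exact absurd (Finset.mem_univ _) h
  choose B hBsup hBmeas hBae using fun v => (hAnm v).exists_measurable_superset_ae_eq
  have hind : ∀ᵐ ω ∂P, ∀ v : Fin t → ZMod N,
      Set.indicator (A v) (fun _ => g v) ω = Set.indicator (B v) (fun _ => g v) ω := by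
    rw [MeasureTheory.ae_all_iff]
    intro v
    filter_upwards [hBae v] with ω hω
    have hmem : (ω ∈ A v) = (ω ∈ B v) := hω.symm
    classical
    simp only [Set.indicator]
    exact ite_congr hmem (fun _ => rfl) (fun _ => rfl)
  calc ∫ ω, g (fun s : Fin t => k s.val ω) ∂P
      = ∫ ω, ∑ v : Fin t → ZMod N, Set.indicator (A v) (fun _ => g v) ω ∂P := by
        apply integral_congr_ae
        exact Filter.Eventually.of_forall fun ω => hfun ω
    _ = ∫ ω, ∑ v : Fin t → ZMod N, Set.indicator (B v) (fun _ => g v) ω ∂P := by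
        apply integral_congr_ae
        filter_upwards [hind] with ω hω
        exact Finset.sum_congr rfl fun v _ => hω v
    _ = ∑ v : Fin t → ZMod N, ∫ ω, Set.indicator (B v) (fun _ => g v) ω ∂P :=
        integral_finset_sum _ fun v _ => (integrable_const (g v)).indicator (hBmeas v)
    _ = ∑ v : Fin t → ZMod N, ((N : ℝ)⁻¹) ^ t * g v := by
        refine Finset.sum_congr rfl fun v _ => ?_
        rw [MeasureTheory.integral_indicator_const (g v) (hBmeas v)]
        have hPB : P (B v) = (N : ENNReal)⁻¹ ^ t := by
          rw [measure_congr (hBae v), hAmeas v]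
        rw [measureReal_def, hPB, smul_eq_mul]
        congr 1
        rw [ENNReal.toReal_pow, ENNReal.toReal_inv]
        simp
end Prob

/-- For the compensator process with i.i.d. uniformly chosen edges, the sum
`∑ᵢ s_t(i)` vanishes for all times, and `E[‖s_t‖₂²] ≤ β² N³` for all `t ≥ 0`. -/
theorem compensator_uniform_L2_bound
    (N : ℕ) [NeZero N] (hN : 2 ≤ N) (β : ℝ)
    {Ω : Type*} [MeasurableSpace Ω] (P : Measure Ω) [IsProbabilityMeasure P]
    (k : ℕ → Ω → ZMod N)
    (hindep : iIndepFun (m := fun _ => (⊤ : MeasurableSpace (ZMod N))) k P)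
    (hunif : ∀ (t : ℕ) (a : ZMod N), P {ω | k t ω = a} = (N : ENNReal)⁻¹) :
    (∀ (t : ℕ) (ω : Ω), ∑ i : ZMod N, compProcess β (fun s => k s ω) t i = 0) ∧
    (∀ t : ℕ, ∫ ω, (∑ i : ZMod N, (compProcess β (fun s => k s ω) t i) ^ 2) ∂P
      ≤ β ^ 2 * (N : ℝ) ^ 3) := by
  constructor
  · intro t ω
    exact sum_compProcess hN β _ t
  · intro t
    set g : (Fin t → ZMod N) → ℝ :=
      fun v => ∑ i : ZMod N, (compProcess β (extSeq v) t i) ^ 2 with hg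
    have hrw : ∀ ω : Ω, (∑ i : ZMod N, (compProcess β (fun s => k s ω) t i) ^ 2)
        = g (fun s : Fin t => k s.val ω) := by
      intro ω
      have hcongr : compProcess β (fun s => k s ω) t
          = compProcess β (extSeq (fun s : Fin t => k s.val ω)) t := by
        apply compProcess_congr
        intro s hs
        simp [extSeq, dif_pos hs]
      rw [hg, hcongr]
    have h1 : ∫ ω, (∑ i : ZMod N, (compProcess β (fun s => k s ω) t i) ^ 2) ∂P
        = ∫ ω, g (fun s : Fin t => k s.val ω) ∂P :=
      integral_congr_ae (Filter.Eventually.of_forall hrw)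
    rw [h1, key_integral P k hindep hunif t g, ← Finset.mul_sum]
    exact detSum_main hN β t
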